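/- Let A be a synaptic algebra with projection lattice P and let e,f ∈ P. Then: (i) the Sasaki projections φ_e(f) and φ_f(e) are exchanged by a symmetry in A; (ii) (symmetry parallelogram law) e − (e ∧ f) and (e ∨ f) − f are exchanged by a symmetry in A; (iii) if e and f are complements in P (i.e., e ∧ f = 0 and e ∨ f = 1), then e and f^⊥ are exchanged by a symmetry in A; (iv) if e is not orthogonal to f, then there are nonzero projections e₁ ≤ e and f₁ ≤ f that are exchanged by a symmetry. -/
import Mathlib


/-- For subsets `A, B` of a ring `R`, the commutant of `B` within `A`:
`C(B) = {x ∈ A : x b = b x for all b ∈ B}`. -/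
def SynComm {R : Type*} [Ring R] (A : Set R) (B : Set R) : Set R :=
  {x | x ∈ A ∧ ∀ b ∈ B, x * b = b * x}

/-- A synaptic algebra: a real vector subspace `A` of a real linear associative
algebra `R` with unity, satisfying axioms SA1–SA8 of Foulis.  The partial order
is recorded as a relation `le` on `R`, whose axioms are imposed on elements of
`A`; `1` is an order unit, the order is archimedean, and the norm convergence
occurring in SA8 is expressed via the order-unit characterization
`‖a‖ ≤ ε ↔ -ε•1 ≤ a ≤ ε•1`. -/
structure SynapticAlgebra (R : Type*) [Ring R] [Algebra ℝ R] where
  A : Set R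
  zero_mem : (0 : R) ∈ A
  one_mem : (1 : R) ∈ A
  add_mem : ∀ {a b : R}, a ∈ A → b ∈ A → a + b ∈ A
  smul_mem : ∀ (r : ℝ) {a : R}, a ∈ A → r • a ∈ A
  /-- the partial order on `A` (SA1) -/
  le : R → R → Prop
  le_refl : ∀ a ∈ A, le a a
  le_trans : ∀ a ∈ A, ∀ b ∈ A, ∀ c ∈ A, le a b → le b c → le a c
  le_antisymm : ∀ a ∈ A, ∀ b ∈ A, le a b → le b a → a = b
  add_le_add : ∀ a ∈ A, ∀ b ∈ A, ∀ c ∈ A, le a b → le (a + c) (b + c)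
  smul_nonneg : ∀ (r : ℝ), 0 ≤ r → ∀ a ∈ A, le 0 a → le 0 (r • a)
  /-- SA1: the ordered vector space `A` is archimedean -/
  archimedean : ∀ a ∈ A, ∀ b ∈ A, (∀ n : ℕ, le (n • a) b) → le a 0
  /-- SA1: `1` is an order unit for `A` -/
  orderUnit : ∀ a ∈ A, ∃ r : ℝ, le a (r • (1 : R))
  /-- SA2 (together with closure of `A` under squaring) -/
  sq_mem : ∀ a ∈ A, a * a ∈ A
  sq_nonneg : ∀ a ∈ A, le 0 (a * a)
  /-- SA3 -/
  SA3 : ∀ a ∈ A, ∀ b ∈ A, le 0 a → le 0 b → le 0 (a * b * a)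
  /-- SA4 -/
  SA4 : ∀ a ∈ A, ∀ b ∈ A, le 0 b → a * b * a = 0 → a * b = 0 ∧ b * a = 0
  /-- SA5: positive elements have square roots in `CC(a)` -/
  SA5 : ∀ a ∈ A, le 0 a →
    ∃ b ∈ SynComm A (SynComm A {a}), le 0 b ∧ b * b = a
  /-- SA6: existence of carrier projections -/
  SA6 : ∀ a ∈ A, ∃ p ∈ A, p * p = p ∧ ∀ b ∈ A, (a * b = 0 ↔ p * b = 0)
  /-- SA7: elements above `1` are invertible -/
  SA7 : ∀ a ∈ A, le 1 a → ∃ b ∈ A, a * b = 1 ∧ b * a = 1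
  /-- SA8: commutants are closed under norm limits of ascending commuting sequences -/
  SA8 : ∀ a ∈ A, ∀ b ∈ A, ∀ f : ℕ → R, (∀ n, f n ∈ A) →
    (∀ n, f n * b = b * f n) → (∀ n m, f n * f m = f m * f n) →
    (∀ n, le (f n) (f (n + 1))) →
    (∀ ε : ℝ, 0 < ε → ∃ N : ℕ, ∀ n ≥ N,
        le (a - f n) (ε • (1 : R)) ∧ le ((-ε) • (1 : R)) (a - f n)) →
    a * b = b * a
  /-- non-degeneracy: `0 ≠ 1` -/
  nondegenerate : (0 : R) ≠ 1

namespace SynapticAlgebra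

variable {R : Type*} [Ring R] [Algebra ℝ R] (S : SynapticAlgebra R)

/-- The set `P` of projections of the synaptic algebra. -/
def Proj : Set R := {p | p ∈ S.A ∧ p * p = p}

/-- A symmetry: an element `s ∈ A` with `s² = 1`. -/
def IsSymmetry (s : R) : Prop := s ∈ S.A ∧ s * s = 1

/-- Projections `e` and `f` are exchanged by a symmetry. -/
def ExchBySym (e f : R) : Prop := ∃ s, S.IsSymmetry s ∧ s * e * s = f

/-- `p ∼ q`: equivalence of projections induced by finite sequences of
symmetries, i.e. `q = sₙ ⋯ s₁ p s₁ ⋯ sₙ`. -/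
def Equiv (p q : R) : Prop := Relation.ReflTransGen S.ExchBySym p q

/-- `p` and `q` are related: they have nonzero equivalent subprojections. -/
def Related (p q : R) : Prop :=
  ∃ p₁ ∈ S.Proj, ∃ q₁ ∈ S.Proj, p₁ ≠ 0 ∧ q₁ ≠ 0 ∧
    S.le p₁ p ∧ S.le q₁ q ∧ S.Equiv p₁ q₁

/-- `p ≼ q`: `p` is equivalent to a subprojection of `q`. -/
def SubEquiv (p q : R) : Prop := ∃ q₁ ∈ S.Proj, S.le q₁ q ∧ S.Equiv p q₁

/-- `c` commutes with every element of `A` (so a projection `c` with this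
property is a central projection, `c ∈ P ∩ C(A)`). -/
def IsCentral (c : R) : Prop := ∀ a ∈ S.A, c * a = a * c

/-- `m = e ∧ f`, the infimum of `e` and `f` in the projection lattice `P`. -/
def IsMeet (e f m : R) : Prop :=
  m ∈ S.Proj ∧ S.le m e ∧ S.le m f ∧
    ∀ r ∈ S.Proj, S.le r e → S.le r f → S.le r m

/-- `j = e ∨ f`, the supremum of `e` and `f` in the projection lattice `P`. -/
def IsJoin (e f j : R) : Prop :=
  j ∈ S.Proj ∧ S.le e j ∧ S.le f j ∧
    ∀ r ∈ S.Proj, S.le e r → S.le f r → S.le j r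

/-- `m = ⋁ Q`, the supremum of the set `Q` in the projection lattice `P`. -/
def IsSupOf (Q : Set R) (m : R) : Prop :=
  m ∈ S.Proj ∧ (∀ q ∈ Q, S.le q m) ∧
    ∀ b ∈ S.Proj, (∀ q ∈ Q, S.le q b) → S.le m b

/-- `m = ⋀ Q`, the infimum of the set `Q` in the projection lattice `P`. -/
def IsInfOf (Q : Set R) (m : R) : Prop :=
  m ∈ S.Proj ∧ (∀ q ∈ Q, S.le m q) ∧
    ∀ b ∈ S.Proj, (∀ q ∈ Q, S.le b q) → S.le b m

/-- The projection lattice `P` is a complete lattice: every subset of `P`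
has a supremum and an infimum in `P`. -/
def ProjComplete : Prop :=
  ∀ Q ⊆ S.Proj, (∃ m, S.IsSupOf Q m) ∧ (∃ m, S.IsInfOf Q m)

/-- The projection lattice `P` is centrally orthocomplete: every family of
projections dominated by a pairwise orthogonal family of central projections
has a supremum in `P`. -/
def CentrallyOrthocomplete : Prop :=
  ∀ Q ⊆ S.Proj, ∀ c : R → R,
    (∀ q ∈ Q, c q ∈ S.Proj ∧ S.IsCentral (c q) ∧ S.le q (c q)) →
    (∀ q ∈ Q, ∀ q' ∈ Q, q ≠ q' → c q * c q' = 0) →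
    ∃ m, S.IsSupOf Q m

/-- `c = γ p`: `c` is the central cover of `p`, the smallest central
projection dominating `p`. -/
def IsCentralCover (p c : R) : Prop :=
  c ∈ S.Proj ∧ S.IsCentral c ∧ S.le p c ∧
    ∀ d ∈ S.Proj, S.IsCentral d → S.le p d → S.le c d

/-- `x = φ_e(f) = e ∧ (e^⊥ ∨ f)`, the Sasaki projection of `f` determined
by `e`, in the projection lattice `P` (where `e^⊥ = 1 - e`). -/
def IsSasaki (e f x : R) : Prop :=
  ∃ j, S.IsJoin (1 - e) f j ∧ S.IsMeet e j x

/-- Mackey compatibility of projections `p` and `q` in the OML `P`: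
there are pairwise orthogonal projections `p₁, q₁, d` with `p = p₁ ∨ d = p₁ + d`
and `q = q₁ ∨ d = q₁ + d` (orthogonal projections satisfy `pq = qp = 0` and
their join is their sum). -/
def Compatible (p q : R) : Prop :=
  ∃ p₁ ∈ S.Proj, ∃ q₁ ∈ S.Proj, ∃ d ∈ S.Proj,
    p₁ * q₁ = 0 ∧ q₁ * p₁ = 0 ∧ p₁ * d = 0 ∧ d * p₁ = 0 ∧
    q₁ * d = 0 ∧ d * q₁ = 0 ∧ p = p₁ + d ∧ q = q₁ + d

end SynapticAlgebra

namespace SynapticAlgebra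

variable {R : Type*} [Ring R] [Algebra ℝ R] (S : SynapticAlgebra R)

lemma negA {a : R} (ha : a ∈ S.A) : -a ∈ S.A := by
  have h := S.smul_mem (-1) ha
  rwa [neg_smul, one_smul] at h

lemma subA {a b : R} (ha : a ∈ S.A) (hb : b ∈ S.A) : a - b ∈ S.A := by
  have h := S.add_mem ha (S.negA hb)
  rwa [← sub_eq_add_neg] at h

lemma jordanA {a b : R} (ha : a ∈ S.A) (hb : b ∈ S.A) : a*b + b*a ∈ S.A := by
  have h2 := S.subA (S.subA (S.sq_mem _ (S.add_mem ha hb)) (S.sq_mem _ ha)) (S.sq_mem _ hb)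
  have h3 : (a+b)*(a+b) - a*a - b*b = a*b + b*a := by noncomm_ring
  rwa [h3] at h2

lemma abaA {a b : R} (ha : a ∈ S.A) (hb : b ∈ S.A) : a*b*a ∈ S.A := by
  have hJ := S.jordanA ha hb
  have h3 := S.subA (S.jordanA ha hJ) (S.jordanA (S.sq_mem _ ha) hb)
  have he : a*(a*b+b*a) + (a*b+b*a)*a - ((a*a)*b + b*(a*a)) = (2:ℝ) • (a*b*a) := by
    rw [two_smul]; noncomm_ring
  have h4 := S.smul_mem (2:ℝ)⁻¹ h3
  rw [he, smul_smul, inv_mul_cancel₀ (by norm_num : (2:ℝ) ≠ 0), one_smul] at h4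
  exact h4

lemma le0_sub {a b : R} (ha : a ∈ S.A) (hb : b ∈ S.A) (h : S.le a b) : S.le 0 (b - a) := by
  have h2 := S.add_le_add a ha b hb (-a) (S.negA ha) h
  rwa [add_neg_cancel, ← sub_eq_add_neg] at h2

lemma le_of_sub {a b : R} (ha : a ∈ S.A) (hb : b ∈ S.A) (h : S.le 0 (b - a)) : S.le a b := by
  have h2 := S.add_le_add 0 S.zero_mem (b-a) (S.subA hb ha) a ha h
  rwa [zero_add, sub_add_cancel] at h2

lemma projA {p : R} (hp : p ∈ S.Proj) : p ∈ S.A := hp.1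

lemma proj_nonneg {p : R} (hp : p ∈ S.Proj) : S.le 0 p := by
  have h := S.sq_nonneg p hp.1
  rwa [hp.2] at h

lemma compl_proj {p : R} (hp : p ∈ S.Proj) : (1 - p) ∈ S.Proj := by
  refine ⟨S.subA S.one_mem hp.1, ?_⟩
  calc (1-p)*(1-p) = 1 - p - p + p*p := by noncomm_ring
  _ = 1 - p := by rw [hp.2]; abel

lemma proj_le {p q : R} (hp : p ∈ S.Proj) (hq : q ∈ S.Proj)
    (h1 : p*q = p) (h2 : q*p = p) : S.le p q := by
  have hqp : q - p ∈ S.A := S.subA hq.1 hp.1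
  have hsq : (q-p)*(q-p) = q - p := by
    calc (q-p)*(q-p) = q*q - q*p - p*q + p*p := by noncomm_ring
    _ = q - p := by rw [hq.2, hp.2, h1, h2]; abel
  have h3 := S.sq_nonneg _ hqp
  rw [hsq] at h3
  exact S.le_of_sub hp.1 hq.1 h3

lemma le_proj {p q : R} (hp : p ∈ S.Proj) (hq : q ∈ S.Proj) (h : S.le p q) :
    p*q = p ∧ q*p = p := by
  have hq' : (1-q) ∈ S.Proj := S.compl_proj hq
  have hm : (1-q)*p*(1-q) ∈ S.A := S.abaA hq'.1 hp.1
  have h1 : S.le 0 ((1-q) * (q - p) * (1-q)) :=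
    S.SA3 (1-q) hq'.1 (q-p) (S.subA hq.1 hp.1) (S.proj_nonneg hq') (S.le0_sub hp.1 hq.1 h)
  have key : (1-q) * (q - p) * (1-q) = 0 - (1-q)*p*(1-q) := by
    have hq'q : (1-q) * q = 0 := by rw [sub_mul, one_mul, hq.2, sub_self]
    calc (1-q)*(q-p)*(1-q) = ((1-q)*q)*(1-q) - (1-q)*p*(1-q) := by noncomm_ring
    _ = 0 - (1-q)*p*(1-q) := by rw [hq'q, zero_mul]
  rw [key] at h1
  have h2 : S.le ((1-q)*p*(1-q)) 0 := S.le_of_sub hm S.zero_mem h1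
  have h0 : S.le 0 ((1-q)*p*(1-q)) :=
    S.SA3 (1-q) hq'.1 p hp.1 (S.proj_nonneg hq') (S.proj_nonneg hp)
  have heq : (1-q)*p*(1-q) = 0 := S.le_antisymm _ hm _ S.zero_mem h2 h0
  have h4 := S.SA4 (1-q) hq'.1 p hp.1 (S.proj_nonneg hp) heq
  constructor
  · have h5 := h4.2
    rw [mul_sub, mul_one] at h5
    exact (sub_eq_zero.mp h5).symm
  · have h5 := h4.1
    rw [sub_mul, one_mul] at h5
    exact (sub_eq_zero.mp h5).symm

lemma L1 {x q : R} (hx : x ∈ S.A) (hq : q ∈ S.Proj) (h : x*q*x = 0) : x*q = 0 ∧ q*x = 0 :=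
  S.SA4 x hx q hq.1 (S.proj_nonneg hq) h

lemma L1' {x q : R} (hx : x ∈ S.A) (hq : q ∈ S.Proj) (h : x*q = 0) : q*x = 0 :=
  (S.L1 hx hq (by rw [h, zero_mul])).2

lemma L1'' {x q : R} (hx : x ∈ S.A) (hq : q ∈ S.Proj) (h : q*x = 0) : x*q = 0 :=
  (S.L1 hx hq (by rw [mul_assoc, h, mul_zero])).1

end SynapticAlgebra
namespace SynapticAlgebra

variable {R : Type*} [Ring R] [Algebra ℝ R] (S : SynapticAlgebra R)

/-- `p` is the carrier projection of `a`. -/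
def IsCarrier (a p : R) : Prop :=
  p ∈ S.Proj ∧ ∀ b ∈ S.A, (a * b = 0 ↔ p * b = 0)

lemma exists_carrier {a : R} (ha : a ∈ S.A) : ∃ p, S.IsCarrier a p := by
  obtain ⟨p, hpA, hpp, hiff⟩ := S.SA6 a ha
  exact ⟨p, ⟨hpA, hpp⟩, hiff⟩

lemma carrier_absorb {a p : R} (ha : a ∈ S.A) (hc : S.IsCarrier a p) :
    a * p = a ∧ p * a = a := by
  have h1 : a * (1 - p) = 0 := by
    refine (hc.2 (1-p) (S.subA S.one_mem hc.1.1)).mpr ?_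
    rw [mul_sub, mul_one, hc.1.2, sub_self]
  have h2 : a*p = a := by
    rw [mul_sub, mul_one] at h1
    exact (sub_eq_zero.mp h1).symm
  have h3 : (1-p)*a = 0 := S.L1' ha (S.compl_proj hc.1) h1
  have h4 : p*a = a := by
    rw [sub_mul, one_mul] at h3
    exact (sub_eq_zero.mp h3).symm
  exact ⟨h2, h4⟩

lemma carrier_unique {a p p' : R} (h : S.IsCarrier a p) (h' : S.IsCarrier a p') : p = p' := by
  have h1 : a * (1 - p') = 0 := (h'.2 _ (S.subA S.one_mem h'.1.1)).mpr
    (by rw [mul_sub, mul_one, h'.1.2, sub_self])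
  have h2 : p * (1 - p') = 0 := (h.2 _ (S.subA S.one_mem h'.1.1)).mp h1
  have h1' : a * (1 - p) = 0 := (h.2 _ (S.subA S.one_mem h.1.1)).mpr
    (by rw [mul_sub, mul_one, h.1.2, sub_self])
  have h3 : p' * (1 - p) = 0 := (h'.2 _ (S.subA S.one_mem h.1.1)).mp h1'
  have h4 : (1-p')*p = 0 := S.L1' h.1.1 (S.compl_proj h'.1) h2
  have e1 : p'*p = p := by
    rw [sub_mul, one_mul] at h4
    exact (sub_eq_zero.mp h4).symm
  have e2 : p'*p = p' := by
    rw [mul_sub, mul_one] at h3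
    exact (sub_eq_zero.mp h3).symm
  exact e1.symm.trans e2

lemma conj_cancel {s : R} (hss : s*s = 1) (x b : R) :
    s*((s*x*s)*b)*s = x*(s*b*s) := by
  have h : s*((s*x*s)*b)*s = (s*s)*(x*(s*b*s)) := by noncomm_ring
  rw [h, hss, one_mul]

lemma conj_cancel' {s : R} (hss : s*s = 1) (x b : R) :
    (s*x*s)*b = s*(x*(s*b*s))*s := by
  have h : s*(x*(s*b*s))*s = ((s*x*s)*b)*(s*s) := by noncomm_ring
  rw [h, hss, mul_one]

lemma carrier_conj {a p s : R} (ha : a ∈ S.A) (hs : S.IsSymmetry s) (hc : S.IsCarrier a p) :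
    S.IsCarrier (s*a*s) (s*p*s) := by
  obtain ⟨hsA, hss⟩ := hs
  refine ⟨⟨S.abaA hsA hc.1.1, ?_⟩, ?_⟩
  · calc (s*p*s)*(s*p*s) = s*(p*((s*s)*(p*s))) := by noncomm_ring
    _ = s*(p*(p*s)) := by rw [hss, one_mul]
    _ = s*((p*p)*s) := by rw [mul_assoc]
    _ = s*p*s := by rw [hc.1.2, mul_assoc]
  · intro b hb
    have hsbs : s*b*s ∈ S.A := S.abaA hsA hb
    constructor
    · intro h
      have h2 : a*(s*b*s) = 0 := by
        rw [← conj_cancel hss a b, h, mul_zero, zero_mul]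
      have h3 : p*(s*b*s) = 0 := (hc.2 _ hsbs).mp h2
      rw [conj_cancel' hss p b, h3, mul_zero, zero_mul]
    · intro h
      have h2 : p*(s*b*s) = 0 := by
        rw [← conj_cancel hss p b, h, mul_zero, zero_mul]
      have h3 : a*(s*b*s) = 0 := (hc.2 _ hsbs).mpr h2
      rw [conj_cancel' hss a b, h3, mul_zero, zero_mul]

lemma sq_expand {e f : R} (he2 : e*e = e) (hf2 : f*f = f) :
    (e+f-1)*(e+f-1) = e*f + f*e + 1 - e - f := by
  have h1 : (e+f-1)*(e+f-1) = e*e + (e*f + f*e + 1 - e - f) + f*f - e - f := by noncomm_ring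
  rw [h1, he2, hf2]; abel

lemma exists_sqrt_comm {e f : R} (he : e ∈ S.Proj) (hf : f ∈ S.Proj) :
    ∃ h : R, h ∈ S.A ∧ h*h = (e+f-1)*(e+f-1) ∧ h*e = e*h ∧ h*f = f*h ∧
      h*(e+f-1) = (e+f-1)*h := by
  have haA : (e+f-1) ∈ S.A := S.subA (S.add_mem he.1 hf.1) S.one_mem
  obtain ⟨h, hmem, hpos, hsq⟩ := S.SA5 ((e+f-1)*(e+f-1)) (S.sq_mem _ haA) (S.sq_nonneg _ haA)
  have hhA : h ∈ S.A := hmem.1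
  have key := sq_expand he.2 hf.2 (e := e) (f := f)
  have hea : e*((e+f-1)*(e+f-1)) = ((e+f-1)*(e+f-1))*e := by
    have l1 : e*((e+f-1)*(e+f-1)) = e*f*e := by
      calc e*((e+f-1)*(e+f-1)) = e*(e*f+f*e+1-e-f) := by rw [key]
      _ = e*e*f + e*(f*e) + e - e*e - e*f := by noncomm_ring
      _ = e*f*e := by rw [he.2, ← mul_assoc]; abel
    have l2 : ((e+f-1)*(e+f-1))*e = e*f*e := by
      calc ((e+f-1)*(e+f-1))*e = (e*f+f*e+1-e-f)*e := by rw [key]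
      _ = e*f*e + f*(e*e) + e - e*e - f*e := by noncomm_ring
      _ = e*f*e := by rw [he.2]; abel
    rw [l1, l2]
  have hfa : f*((e+f-1)*(e+f-1)) = ((e+f-1)*(e+f-1))*f := by
    have l1 : f*((e+f-1)*(e+f-1)) = f*e*f := by
      calc f*((e+f-1)*(e+f-1)) = f*(e*f+f*e+1-e-f) := by rw [key]
      _ = f*(e*f) + f*f*e + f - f*e - f*f := by noncomm_ring
      _ = f*e*f := by rw [hf.2, ← mul_assoc]; abel
    have l2 : ((e+f-1)*(e+f-1))*f = f*e*f := by
      calc ((e+f-1)*(e+f-1))*f = (e*f+f*e+1-e-f)*f := by rw [key]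
      _ = e*(f*f) + f*e*f + f - e*f - f*f := by noncomm_ring
      _ = f*e*f := by rw [hf.2]; abel
    rw [l1, l2]
  have hcomm := hmem.2
  refine ⟨h, hhA, hsq, ?_, ?_, ?_⟩
  · exact hcomm e ⟨he.1, fun b hb => by
      rw [Set.mem_singleton_iff] at hb; subst hb; exact hea⟩
  · exact hcomm f ⟨hf.1, fun b hb => by
      rw [Set.mem_singleton_iff] at hb; subst hb; exact hfa⟩
  · exact hcomm (e+f-1) ⟨haA, fun b hb => by
      rw [Set.mem_singleton_iff] at hb; subst hb
      exact (mul_assoc (e+f-1) (e+f-1) (e+f-1)).symm⟩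

lemma polar {a h : R} (haA : a ∈ S.A) (hhA : h ∈ S.A) (hh2 : h*h = a*a) (hha : h*a = a*h) :
    ∃ s, S.IsSymmetry s ∧ s*a = h ∧ a*s = h := by
  have hdA : h - a ∈ S.A := S.subA hhA haA
  have huA : h + a ∈ S.A := S.add_mem hhA haA
  have hdu : (h-a)*(h+a) = 0 := by
    calc (h-a)*(h+a) = (h*h - a*a) + (h*a - a*h) := by noncomm_ring
    _ = 0 := by rw [hh2, hha]; abel
  obtain ⟨p, hp⟩ := S.exists_carrier hdA
  have habs := S.carrier_absorb hdA hp
  have hpu : p*(h+a) = 0 := (hp.2 _ huA).mp hdu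
  have hup : (h+a)*p = 0 := S.L1'' huA hp.1 hpu
  have hsA : (1 - (p + p)) ∈ S.A := S.subA S.one_mem (S.add_mem hp.1.1 hp.1.1)
  have hss : (1 - (p+p))*(1 - (p+p)) = 1 := by
    have h1 : (1 - (p+p))*(1 - (p+p)) = 1 - (p+p) - (p+p) + (p*p + p*p + p*p + p*p) := by
      noncomm_ring
    rw [h1, hp.1.2]; abel
  refine ⟨1 - (p+p), ⟨hsA, hss⟩, ?_, ?_⟩
  · have h1 : p*a + p*a = p*(h+a) - p*(h-a) := by noncomm_ring
    rw [hpu, habs.2] at h1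
    have h2 : (1 - (p+p))*a = a - (p*a + p*a) := by noncomm_ring
    rw [h2, h1]; abel
  · have h1 : a*p + a*p = (h+a)*p - (h-a)*p := by noncomm_ring
    rw [hup, habs.1] at h1
    have h2 : a*(1 - (p+p)) = a - (a*p + a*p) := by noncomm_ring
    rw [h2, h1]; abel

end SynapticAlgebra
namespace SynapticAlgebra

variable {R : Type*} [Ring R] [Algebra ℝ R] (S : SynapticAlgebra R)

/-- The fundamental exchange lemma: the carriers of `efe` and `fef` are
exchanged by a symmetry. -/
lemma exchange {e f g k : R} (he : e ∈ S.Proj) (hf : f ∈ S.Proj)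
    (hg : S.IsCarrier (e*f*e) g) (hk : S.IsCarrier (f*e*f) k) :
    ∃ s, S.IsSymmetry s ∧ s*g*s = k := by
  obtain ⟨h, hhA, hh2, hhe, hhf, hha⟩ := S.exists_sqrt_comm he hf
  have haA : (e+f-1) ∈ S.A := S.subA (S.add_mem he.1 hf.1) S.one_mem
  obtain ⟨s, hsym, hsa, has⟩ := S.polar haA hhA hh2 hha
  have iaf : (e+f-1)*f = e*f := by
    calc (e+f-1)*f = e*f + f*f - f := by noncomm_ring
    _ = e*f := by rw [hf.2]; abel
  have id4 : (e+f-1)*f*(e+f-1) = e*f*e := by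
    calc (e+f-1)*f*(e+f-1) = (e*f)*(e+f-1) := by rw [iaf]
    _ = e*f*e + e*(f*f) - e*f := by noncomm_ring
    _ = e*f*e := by rw [hf.2]; abel
  have id5 : f*((e+f-1)*(e+f-1)) = f*e*f := by
    calc f*((e+f-1)*(e+f-1)) = f*(e*f+f*e+1-e-f) := by rw [sq_expand he.2 hf.2]
    _ = f*(e*f) + f*f*e + f - f*e - f*f := by noncomm_ring
    _ = f*e*f := by rw [hf.2, ← mul_assoc]; abel
  have hmain : s*(e*f*e)*s = f*e*f := by
    calc s*(e*f*e)*s = s*((e+f-1)*f*(e+f-1))*s := by rw [id4]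
    _ = (s*(e+f-1))*(f*((e+f-1)*s)) := by noncomm_ring
    _ = h*(f*h) := by rw [hsa, has]
    _ = f*(h*h) := by rw [← mul_assoc, hhf, mul_assoc]
    _ = f*e*f := by rw [hh2]; exact id5
  have hcg := S.carrier_conj (S.abaA he.1 hf.1) hsym hg
  rw [hmain] at hcg
  exact ⟨s, hsym, S.carrier_unique hcg hk⟩

/-- The carrier of `pqp` lies below `p`. -/
lemma carrier_le {p q g : R} (hp : p ∈ S.Proj) (hq : q ∈ S.Proj)
    (hg : S.IsCarrier (p*q*p) g) : g*p = g ∧ p*g = g := by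
  have h1 : (p*q*p)*(1-p) = 0 := by
    have e : p*q*p*p = p*q*p := by rw [mul_assoc (p*q) p p, hp.2]
    rw [mul_sub, mul_one, e, sub_self]
  have h2 : g*(1-p) = 0 := (hg.2 _ (S.subA S.one_mem hp.1)).mp h1
  have h3 : g*p = g := by
    rw [mul_sub, mul_one] at h2
    exact (sub_eq_zero.mp h2).symm
  have h4 : (1-p)*g = 0 := S.L1' hg.1.1 (S.compl_proj hp) h2
  have h5 : p*g = g := by
    rw [sub_mul, one_mul] at h4
    exact (sub_eq_zero.mp h4).symm
  exact ⟨h3, h5⟩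

/-- `p - (pqp)°` is orthogonal to `q`. -/
lemma carrier_diff_orth {p q g : R} (hp : p ∈ S.Proj) (hq : q ∈ S.Proj)
    (hg : S.IsCarrier (p*q*p) g) : (p - g)*q = 0 ∧ q*(p - g) = 0 := by
  obtain ⟨hgp, hpg⟩ := S.carrier_le hp hq hg
  have habs := S.carrier_absorb (S.abaA hp.1 hq.1) hg
  have hxA : p - g ∈ S.A := S.subA hp.1 hg.1.1
  have hxp : (p-g)*p = p-g := by rw [sub_mul, hp.2, hgp]
  have hpx : p*(p-g) = p-g := by rw [mul_sub, hp.2, hpg]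
  have hx1 : (p*q*p)*(p-g) = 0 := by
    have e : p*q*p*p = p*q*p := by rw [mul_assoc (p*q) p p, hp.2]
    rw [mul_sub, e, habs.1, sub_self]
  have l0 : (p-g)*((p*q*p)*(p-g)) = ((p-g)*p)*(q*(p*(p-g))) := by noncomm_ring
  rw [hxp, hpx, hx1, mul_zero] at l0
  have hx2 : (p-g)*q*(p-g) = 0 := by rw [mul_assoc, ← l0]
  exact S.SA4 (p-g) hxA q hq.1 (S.proj_nonneg hq) hx2

/-- The meet of projections `p` and `q` is `p - (p(1-q)p)°`. -/
lemma meet_char {p q g' : R} (hp : p ∈ S.Proj) (hq : q ∈ S.Proj)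
    (hg : S.IsCarrier (p*(1-q)*p) g') : S.IsMeet p q (p - g') := by
  have hq' : (1-q) ∈ S.Proj := S.compl_proj hq
  obtain ⟨hgp, hpg⟩ := S.carrier_le hp hq' hg
  obtain ⟨ho1, ho2⟩ := S.carrier_diff_orth hp hq' hg
  have hmP : (p - g') ∈ S.Proj := by
    refine ⟨S.subA hp.1 hg.1.1, ?_⟩
    calc (p-g')*(p-g') = p*p - p*g' - g'*p + g'*g' := by noncomm_ring
    _ = p - g' := by rw [hp.2, hpg, hgp, hg.1.2]; abel
  refine ⟨hmP, ?_, ?_, ?_⟩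
  · exact S.proj_le hmP hp (by rw [sub_mul, hp.2, hgp]) (by rw [mul_sub, hp.2, hpg])
  · have e1 : (p-g')*q = p-g' := by
      rw [mul_sub, mul_one] at ho1
      exact (sub_eq_zero.mp ho1).symm
    have e2 : q*(p-g') = p-g' := by
      rw [sub_mul, one_mul] at ho2
      exact (sub_eq_zero.mp ho2).symm
    exact S.proj_le hmP hq e1 e2
  · intro r hr hrp hrq
    obtain ⟨hrp1, hrp2⟩ := S.le_proj hr hp hrp
    obtain ⟨hrq1, hrq2⟩ := S.le_proj hr hq hrq
    have h0 : (p*(1-q)*p)*r = 0 := by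
      calc (p*(1-q)*p)*r = p*((1-q)*(p*r)) := by noncomm_ring
      _ = p*((1-q)*r) := by rw [hrp2]
      _ = p*(r - q*r) := by rw [sub_mul, one_mul]
      _ = 0 := by rw [hrq2, sub_self, mul_zero]
    have h1 : g'*r = 0 := (hg.2 r hr.1).mp h0
    have h2 : r*g' = 0 := S.L1'' hr.1 hg.1 h1
    exact S.proj_le hr hmP (by rw [mul_sub, hrp1, h2, sub_zero])
      (by rw [sub_mul, hrp2, h1, sub_zero])

/-- The join of projections `p` and `q` is `q + ((1-q)p(1-q))°`. -/
lemma join_char {p q y : R} (hp : p ∈ S.Proj) (hq : q ∈ S.Proj)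
    (hy : S.IsCarrier ((1-q)*p*(1-q)) y) : S.IsJoin p q (q + y) := by
  have hq' : (1-q) ∈ S.Proj := S.compl_proj hq
  obtain ⟨hy1, hy2⟩ := S.carrier_le hq' hp hy
  obtain ⟨ho1, ho2⟩ := S.carrier_diff_orth hq' hp hy
  have hyq : y*q = 0 := by
    rw [mul_sub, mul_one] at hy1
    exact sub_eq_self.mp hy1
  have hqy : q*y = 0 := by
    rw [sub_mul, one_mul] at hy2
    exact sub_eq_self.mp hy2
  have hjP : (q + y) ∈ S.Proj := by
    refine ⟨S.add_mem hq.1 hy.1.1, ?_⟩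
    calc (q+y)*(q+y) = q*q + q*y + y*q + y*y := by noncomm_ring
    _ = q + y := by rw [hq.2, hqy, hyq, hy.1.2]; abel
  refine ⟨hjP, ?_, ?_, ?_⟩
  · -- le p (q+y) : from p*((1-q)-y) = 0 and ((1-q)-y)*p = 0
    have e1 : p*(q+y) = p := by
      have := ho2  -- p*((1-q)-y) = 0
      calc p*(q+y) = p - p*((1-q)-y) := by noncomm_ring
      _ = p := by rw [this, sub_zero]
    have e2 : (q+y)*p = p := by
      have := ho1  -- ((1-q)-y)*p = 0
      calc (q+y)*p = p - ((1-q)-y)*p := by noncomm_ring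
      _ = p := by rw [this, sub_zero]
    exact S.proj_le hp hjP e1 e2
  · exact S.proj_le hq hjP
      (by rw [mul_add, hq.2, hqy, add_zero])
      (by rw [add_mul, hq.2, hyq, add_zero])
  · intro r hr hpr hqr
    obtain ⟨hpr1, hpr2⟩ := S.le_proj hp hr hpr
    obtain ⟨hqr1, hqr2⟩ := S.le_proj hq hr hqr
    have l1 : (1-q)*(1-r) = 1-r := by
      calc (1-q)*(1-r) = (1 - r - q) + q*r := by noncomm_ring
      _ = 1-r := by rw [hqr1]; abel
    have h0 : ((1-q)*p*(1-q))*(1-r) = 0 := by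
      calc ((1-q)*p*(1-q))*(1-r) = (1-q)*(p*((1-q)*(1-r))) := by noncomm_ring
      _ = (1-q)*(p*(1-r)) := by rw [l1]
      _ = (1-q)*(p - p*r) := by rw [mul_sub, mul_one]
      _ = 0 := by rw [hpr1, sub_self, mul_zero]
    have h1 : y*(1-r) = 0 := (hy.2 _ (S.subA S.one_mem hr.1)).mp h0
    have h2 : y*r = y := by
      rw [mul_sub, mul_one] at h1
      exact (sub_eq_zero.mp h1).symm
    have h3 : (1-r)*y = 0 := S.L1' hy.1.1 (S.compl_proj hr) h1
    have h4 : r*y = y := by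
      rw [sub_mul, one_mul] at h3
      exact (sub_eq_zero.mp h3).symm
    exact S.proj_le hjP hr (by rw [add_mul, hqr1, h2]) (by rw [mul_add, hqr2, h4])

lemma meet_unique {p q m m' : R} (h : S.IsMeet p q m) (h' : S.IsMeet p q m') : m = m' :=
  S.le_antisymm _ h.1.1 _ h'.1.1
    (h'.2.2.2 m h.1 h.2.1 h.2.2.1) (h.2.2.2 m' h'.1 h'.2.1 h'.2.2.1)

lemma join_unique {p q j j' : R} (h : S.IsJoin p q j) (h' : S.IsJoin p q j') : j = j' :=
  S.le_antisymm _ h.1.1 _ h'.1.1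
    (h.2.2.2 j' h'.1 h'.2.1 h'.2.2.1) (h'.2.2.2 j h.1 h.2.1 h.2.2.1)

lemma join_comm {p q j : R} (h : S.IsJoin p q j) : S.IsJoin q p j :=
  ⟨h.1, h.2.2.1, h.2.1, fun r hr h1 h2 => h.2.2.2 r hr h2 h1⟩

/-- The Sasaki projection `φ_p(q)` is the carrier of `pqp`. -/
lemma sasaki_char {p q x g : R} (hp : p ∈ S.Proj) (hq : q ∈ S.Proj)
    (hx : S.IsSasaki p q x) (hg : S.IsCarrier (p*q*p) g) : x = g := by
  obtain ⟨j, hjoin, hmeet⟩ := hx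
  have hp' : (1-p) ∈ S.Proj := S.compl_proj hp
  have hcar : S.IsCarrier ((1-(1-p))*q*(1-(1-p))) g := by
    rw [sub_sub_cancel]; exact hg
  have hJ' : S.IsJoin (1-p) q ((1-p) + g) := S.join_comm (S.join_char hq hp' hcar)
  have hjeq : j = (1-p) + g := S.join_unique hjoin hJ'
  rw [hjeq] at hmeet
  obtain ⟨hgp, hpg⟩ := S.carrier_le hp hq hg
  have hjP : ((1-p) + g) ∈ S.Proj := hJ'.1
  have hMeet : S.IsMeet p ((1-p)+g) g := by
    refine ⟨hg.1, S.proj_le hg.1 hp hgp hpg, ?_, ?_⟩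
    · have e1 : g*((1-p)+g) = g := by
        calc g*((1-p)+g) = g - g*p + g*g := by noncomm_ring
        _ = g := by rw [hgp, hg.1.2]; abel
      have e2 : ((1-p)+g)*g = g := by
        calc ((1-p)+g)*g = g - p*g + g*g := by noncomm_ring
        _ = g := by rw [hpg, hg.1.2]; abel
      exact S.proj_le hg.1 hjP e1 e2
    · intro r hr hrp hrj
      obtain ⟨hr1, hr2⟩ := S.le_proj hr hp hrp
      obtain ⟨hr3, hr4⟩ := S.le_proj hr hjP hrj
      have e1 : r*g = r := by
        have l : r*((1-p)+g) = r - r*p + r*g := by noncomm_ring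
        rw [hr3, hr1] at l
        have l2 : r - r + r*g = r*g := by abel
        rw [l2] at l
        exact l.symm
      have e2 : g*r = r := by
        have l : r*(1-g) = 0 := by rw [mul_sub, mul_one, e1, sub_self]
        have l2 : (1-g)*r = 0 := S.L1' hr.1 (S.compl_proj hg.1) l
        rw [sub_mul, one_mul] at l2
        exact (sub_eq_zero.mp l2).symm
      exact S.proj_le hr hg.1 e1 e2
  exact S.meet_unique hmeet hMeet

end SynapticAlgebra
/-- Theorem 5.9: (i) the Sasaki projections `φ_e(f)` and `φ_f(e)` are exchanged
by a symmetry; (ii) (symmetry parallelogram law) `e - (e ∧ f)` and `(e ∨ f) - f`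
are exchanged by a symmetry; (iii) if `e` and `f` are complements in `P` then
`e` and `f^⊥ = 1 - f` are exchanged by a symmetry; (iv) non-orthogonal
projections have nonzero subprojections exchanged by a symmetry. -/
theorem stmt8 {R : Type*} [Ring R] [Algebra ℝ R] (S : SynapticAlgebra R)
    (e f : R) (he : e ∈ S.Proj) (hf : f ∈ S.Proj) :
    (∀ x y : R, S.IsSasaki e f x → S.IsSasaki f e y →
      ∃ s, S.IsSymmetry s ∧ s * x * s = y) ∧
    (∀ m j : R, S.IsMeet e f m → S.IsJoin e f j →
      ∃ s, S.IsSymmetry s ∧ s * (e - m) * s = j - f) ∧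
    ((S.IsMeet e f 0 ∧ S.IsJoin e f 1) →
      ∃ s, S.IsSymmetry s ∧ s * e * s = 1 - f) ∧
    (¬ (e * f = 0 ∧ f * e = 0) →
      ∃ e₁ ∈ S.Proj, ∃ f₁ ∈ S.Proj, e₁ ≠ 0 ∧ f₁ ≠ 0 ∧
        S.le e₁ e ∧ S.le f₁ f ∧ ∃ s, S.IsSymmetry s ∧ s * e₁ * s = f₁) := by
  obtain ⟨g, hg⟩ := S.exists_carrier (S.abaA he.1 hf.1)
  obtain ⟨k, hk⟩ := S.exists_carrier (S.abaA hf.1 he.1)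
  have hf' : (1-f) ∈ S.Proj := S.compl_proj hf
  obtain ⟨g', hg'⟩ := S.exists_carrier (S.abaA he.1 hf'.1)
  obtain ⟨y', hy'⟩ := S.exists_carrier (S.abaA hf'.1 he.1)
  have part2 : ∀ m j : R, S.IsMeet e f m → S.IsJoin e f j →
      ∃ s, S.IsSymmetry s ∧ s * (e - m) * s = j - f := by
    intro m j hm hj
    have hmeq : m = e - g' := S.meet_unique hm (S.meet_char he hf hg')
    have hjeq : j = f + y' := S.join_unique hj (S.join_char he hf hy')
    obtain ⟨s, hs, hsgy⟩ := S.exchange he hf' hg' hy'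
    refine ⟨s, hs, ?_⟩
    rw [hmeq, hjeq, sub_sub_cancel, add_sub_cancel_left]
    exact hsgy
  refine ⟨?_, part2, ?_, ?_⟩
  · intro x y hx hy
    have hxg : x = g := S.sasaki_char he hf hx hg
    have hyk : y = k := S.sasaki_char hf he hy hk
    obtain ⟨s, hs, h⟩ := S.exchange he hf hg hk
    exact ⟨s, hs, by rw [hxg, hyk]; exact h⟩
  · rintro ⟨h1, h2⟩
    obtain ⟨s, hs, h⟩ := part2 0 1 h1 h2
    rw [sub_zero] at h
    exact ⟨s, hs, h⟩
  · intro hne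
    obtain ⟨s, hs, h⟩ := S.exchange he hf hg hk
    refine ⟨g, hg.1, k, hk.1, ?_, ?_, ?_, ?_, s, hs, h⟩
    · intro h0
      apply hne
      have habs := (S.carrier_absorb (S.abaA he.1 hf.1) hg).1
      rw [h0, mul_zero] at habs
      exact S.SA4 e he.1 f hf.1 (S.proj_nonneg hf) habs.symm
    · intro h0
      apply hne
      have habs := (S.carrier_absorb (S.abaA hf.1 he.1) hk).1
      rw [h0, mul_zero] at habs
      have h4 := S.SA4 f hf.1 e he.1 (S.proj_nonneg he) habs.symm
      exact ⟨h4.2, h4.1⟩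
    · obtain ⟨h1, h2⟩ := S.carrier_le he hf hg
      exact S.proj_le hg.1 he h1 h2
    · obtain ⟨h1, h2⟩ := S.carrier_le hf he hk
      exact S.proj_le hk.1 hf h1 h2
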